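/- arXiv:2401.16709 — 3 statements merged into one kernel-verified Lean document; each statement's English description precedes it below -/
import Mathlib

section
/- Suppose candidates are produced in an order such that the partial soft weights Γ(e_R^{(j)}) are non-decreasing in j, and let e_opt^{(j)} be a TEP minimizing Γ over the first j full candidates e^{(ℓ)} = (e_L^{(ℓ)}, e_R^{(ℓ)}). If for some index j we have Γ(e_opt^{(j)}) ≤ Γ(e_R^{(j)}), then for all ℓ (both ℓ ≤ j and ℓ > j) we have Γ(e_opt^{(j)}) ≤ Γ(e^{(ℓ)}); i.e., e_opt^{(j)} attains the minimum soft weight over the entire (potentially longer) candidate list. -/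
theorem le_add_of_le_of_monotone {ι M : Type*} [Preorder ι] [AddZeroClass M] [Preorder M]
    [AddRightMono M] {L R : ι → M} (hL : ∀ i, 0 ≤ L i) (hR : Monotone R) {c : M} {j i : ι}
    (hc : c ≤ R j) (hji : j ≤ i) : c ≤ L i + R i :=
  calc c ≤ R j := hc
    _ ≤ R i := hR hji
    _ ≤ L i + R i := le_add_of_nonneg_left (hL i)

theorem trivial_stopping_criterion_ML_general (j : ℕ)
    (Γfull ΓL ΓR : ℕ → ℝ) (Γopt : ℝ)
    (hdecomp : ∀ ℓ, Γfull ℓ = ΓL ℓ + ΓR ℓ)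
    (hLnonneg : ∀ ℓ, 0 ≤ ΓL ℓ)
    (hmono : Monotone ΓR)
    (hopt_lb : ∀ ℓ, 1 ≤ ℓ → ℓ ≤ j → Γopt ≤ Γfull ℓ)
    (hstop : Γopt ≤ ΓR j) :
    ∀ ℓ, 1 ≤ ℓ → Γopt ≤ Γfull ℓ := by
  intro ℓ hℓ
  rcases le_total ℓ j with hℓj | hjℓ
  · exact hopt_lb ℓ hℓ hℓj
  · rw [hdecomp]
    exact le_add_of_le_of_monotone hLnonneg hmono hstop hjℓ

/-- Trivial stopping criterion: if the up-to-date optimum over the first `j`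
candidates is no heavier than the `j`-th right-part soft weight, then it is a
global minimum over the whole candidate list. -/
theorem trivial_stopping_criterion_ML (j : ℕ) (hj : 1 ≤ j)
    (Γfull ΓL ΓR : ℕ → ℝ) (Γopt : ℝ)
    (hdecomp : ∀ ℓ, Γfull ℓ = ΓL ℓ + ΓR ℓ)
    (hLnonneg : ∀ ℓ, 0 ≤ ΓL ℓ)
    (hRnonneg : ∀ ℓ, 0 ≤ ΓR ℓ)
    (hmono : Monotone ΓR)
    (hopt_lb : ∀ ℓ, 1 ≤ ℓ → ℓ ≤ j → Γopt ≤ Γfull ℓ)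
    (hopt_mem : ∃ ℓ, 1 ≤ ℓ ∧ ℓ ≤ j ∧ Γopt = Γfull ℓ)
    (hstop : Γopt ≤ ΓR j) :
    ∀ ℓ, 1 ≤ ℓ → Γopt ≤ Γfull ℓ :=
  trivial_stopping_criterion_ML_general j Γfull ΓL ΓR Γopt hdecomp hLnonneg hmono hopt_lb hstop
end

section
/- With the setup of the approximate-ideal stopping criterion: assume the sent TEP e appears at position j* (the first ML position, j* > 1), the threshold satisfies τ ≤ Γ(e_L) + ΔΓ where ΔΓ = Γ(e_opt^{(j*-1)}) − Γ(e_R^{(j*-1)}) − Γ(e_L^{(j*)}), the right soft weights are non-decreasing, and Γ(e) = Γ(e^{(j*)}) with Γ(e_R) ≥ Γ(e_R^{(j*)}). Then Γ(e_opt^{(j*-1)}) − τ − Γ(e_R^{(j*-1)}) ≥ 0; i.e., the stopping criterion Γ(e_opt^{(j)}) < τ + Γ(e_R^{(j)}) cannot trigger at any index j ≤ j*−1. -/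
/-!
The running optimum `Γopt j` is the minimum of the candidate weights over a prefix, so it can only
decrease in `j`, while the right weights `ΓR j` increase. Hence the slack `Γopt j - τ - ΓR j` of
the stopping criterion is antitone, and it suffices to show that it is nonnegative at `j* - 1`.
There it is, since the threshold bound gives `τ + ΓR (j* - 1) ≤ Γopt (j* - 1) - (ΓL j* - ΓLe)`
and the sent word has `ΓLe ≤ ΓL j*`, its total weight being that of the `j*`-th candidate with a
right part at least as heavy.
-/

theorem prefixMin_antitone {α : Type*} [Preorder α] {f m : ℕ → α}
    (hle : ∀ j ℓ, 1 ≤ ℓ → ℓ ≤ j → m j ≤ f ℓ)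
    (hmem : ∀ j, 1 ≤ j → ∃ ℓ, 1 ≤ ℓ ∧ ℓ ≤ j ∧ m j = f ℓ)
    {i j : ℕ} (hi : 1 ≤ i) (hij : i ≤ j) : m j ≤ m i := by
  obtain ⟨ℓ, hℓ, hℓi, hmi⟩ := hmem i hi
  exact hmi ▸ hle j ℓ hℓ (hℓi.trans hij)

theorem add_le_prefixMin_of_le {f m g : ℕ → ℝ} (τ : ℝ) (hg : Monotone g)
    (hle : ∀ j ℓ, 1 ≤ ℓ → ℓ ≤ j → m j ≤ f ℓ)
    (hmem : ∀ j, 1 ≤ j → ∃ ℓ, 1 ≤ ℓ ∧ ℓ ≤ j ∧ m j = f ℓ)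
    {i j : ℕ} (hi : 1 ≤ i) (hij : i ≤ j) (hj : τ + g j ≤ m j) : τ + g i ≤ m i :=
  calc τ + g i ≤ τ + g j := add_le_add_right (hg hij) τ
    _ ≤ m j := hj
    _ ≤ m i := prefixMin_antitone hle hmem hi hij

theorem approximate_ideal_no_premature_stop_general (jstar : ℕ)
    (Γfull ΓL ΓR : ℕ → ℝ) (Γopt : ℕ → ℝ) (ΓLe ΓRe τ : ℝ)
    (hdecomp : ∀ ℓ, Γfull ℓ = ΓL ℓ + ΓR ℓ)
    (hmono : Monotone ΓR)
    (hopt_lb : ∀ j ℓ, 1 ≤ ℓ → ℓ ≤ j → Γopt j ≤ Γfull ℓ)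
    (hopt_mem : ∀ j, 1 ≤ j → ∃ ℓ, 1 ≤ ℓ ∧ ℓ ≤ j ∧ Γopt j = Γfull ℓ)
    (hsent : ΓLe + ΓRe = Γfull jstar)
    (hRe : ΓR jstar ≤ ΓRe)
    (hτ : τ ≤ ΓLe + (Γopt (jstar - 1) - ΓR (jstar - 1) - ΓL jstar)) :
    0 ≤ Γopt (jstar - 1) - τ - ΓR (jstar - 1) ∧
      ∀ j, 1 ≤ j → j ≤ jstar - 1 → ¬ (Γopt j < τ + ΓR j) := by
  have hLe : ΓLe ≤ ΓL jstar := by linarith [hdecomp jstar]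
  have hslack : τ + ΓR (jstar - 1) ≤ Γopt (jstar - 1) := by linarith
  refine ⟨by linarith, fun j hj hjle => not_lt.mpr ?_⟩
  exact add_le_prefixMin_of_le τ hmono hopt_lb hopt_mem hj hjle hslack

/-- Approximate-ideal stopping criterion: under the stated threshold bound, the
criterion cannot trigger before the first ML candidate is generated. -/
theorem approximate_ideal_no_premature_stop (jstar : ℕ) (hj : 1 < jstar)
    (Γfull ΓL ΓR : ℕ → ℝ) (Γopt : ℕ → ℝ) (ΓLe ΓRe τ : ℝ)
    (hdecomp : ∀ ℓ, Γfull ℓ = ΓL ℓ + ΓR ℓ)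
    (hmono : Monotone ΓR)
    (hopt_lb : ∀ j ℓ, 1 ≤ ℓ → ℓ ≤ j → Γopt j ≤ Γfull ℓ)
    (hopt_mem : ∀ j, 1 ≤ j → ∃ ℓ, 1 ≤ ℓ ∧ ℓ ≤ j ∧ Γopt j = Γfull ℓ)
    (hsent : ΓLe + ΓRe = Γfull jstar)
    (hRe : ΓR jstar ≤ ΓRe)
    (hτ : τ ≤ ΓLe + (Γopt (jstar - 1) - ΓR (jstar - 1) - ΓL jstar)) :
    0 ≤ Γopt (jstar - 1) - τ - ΓR (jstar - 1) ∧
      ∀ j, 1 ≤ j → j ≤ jstar - 1 → ¬ (Γopt j < τ + ΓR j) :=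
  approximate_ideal_no_premature_stop_general jstar Γfull ΓL ΓR Γopt ΓLe ΓRe τ hdecomp hmono hopt_lb
    hopt_mem hsent hRe hτ
end

section
/- If e ⋠ e' (e does not precede e'), then there exists a non-decreasing nonnegative vector |r| ∈ ℝ^N with Γ(e) > Γ(e'). Concretely, since e ⋠ e' implies there is a positive integer j with |supp_{≥j}(e)| > |supp_{≥j}(e')|, the 0/1-valued vector r_i = 0 for i < j and r_i = 1 for i ≥ j works. -/
/-!
By Hall's theorem, `e ⪯ e'` holds as soon as every suffix `{i | j ≤ i}` contains at least as many
points of `supp e'` as of `supp e`. So if `e ⋠ e'`, some suffix count of `e` exceeds that of `e'`,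
and the indicator of that suffix is a monotone 0/1 weight under which `Γ` is the suffix count.
-/

/-- The precedence relation on `F₂^N`. -/
def Prec {N : ℕ} (e e' : Fin N → ZMod 2) : Prop :=
  ∃ π : {i : Fin N // e i ≠ 0} → {i : Fin N // e' i ≠ 0},
    Function.Injective π ∧ ∀ i, (i.1 : Fin N) ≤ (π i).1

open Finset

theorem Finset.exists_injective_le_of_card_filter_le {ι : Type*} [LinearOrder ι]
    {s t : Finset ι} (hst : ∀ j, #{i ∈ s | j ≤ i} ≤ #{i ∈ t | j ≤ i}) :
    ∃ f : s → ι, Function.Injective f ∧ ∀ i, f i ∈ t ∧ (i : ι) ≤ f i := by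
  set above : s → Finset ι := fun i => {k ∈ t | (i : ι) ≤ k}
  have hall : ∀ A : Finset s, #A ≤ #(A.biUnion above) := by
    intro A
    rcases A.eq_empty_or_nonempty with rfl | hA
    · simp
    -- The neighbourhood of `A` already contains everything of `t` above the least member of `A`.
    obtain ⟨m, hmA, hmin⟩ := A.exists_min_image Subtype.val hA
    calc #A = #(A.map (Function.Embedding.subtype _)) := (card_map _).symm
      _ ≤ #{i ∈ s | (m : ι) ≤ i} := card_le_card fun x hx => by
          obtain ⟨a, ha, rfl⟩ := mem_map.1 hx
          exact mem_filter.2 ⟨a.2, hmin a ha⟩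
      _ ≤ #(above m) := hst m
      _ ≤ #(A.biUnion above) := card_le_card (subset_biUnion_of_mem above hmA)
  obtain ⟨f, hf, hft⟩ := (all_card_le_biUnion_card_iff_exists_injective above).1 hall
  exact ⟨f, hf, fun i => mem_filter.1 (hft i)⟩

theorem prec_of_card_suffix_le {N : ℕ} {e e' : Fin N → ZMod 2}
    (h : ∀ j, #{i | e i ≠ 0 ∧ j ≤ i} ≤ #{i | e' i ≠ 0 ∧ j ≤ i}) : Prec e e' := by
  obtain ⟨f, hf, hft⟩ := exists_injective_le_of_card_filter_le (s := {i | e i ≠ 0})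
    (t := {i | e' i ≠ 0}) fun j => by simpa only [filter_filter] using h j
  refine ⟨fun i => ⟨f ⟨i, by simpa using i.2⟩, by simpa using (hft _).1⟩, ?_,
    fun i => (hft ⟨i, _⟩).2⟩
  intro a b hab
  simpa [Subtype.ext_iff] using hf (Subtype.ext_iff.1 hab)

theorem sum_val_mul_eq_sum_filter_ne_zero {ι R : Type*} [Fintype ι] [CommSemiring R]
    (v : ι → ZMod 2) (r : ι → R) :
    ∑ i, ((v i).val : R) * r i = ∑ i with v i ≠ 0, r i := by
  rw [sum_filter]
  refine sum_congr rfl fun i _ => ?_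
  obtain h | h : v i = 0 ∨ v i = 1 := by generalize v i = x; revert x; decide
  all_goals simp [h, ZMod.val_one]

theorem sum_val_mul_ite_le_eq_card {ι : Type*} [Fintype ι] [LinearOrder ι]
    (v : ι → ZMod 2) (j : ι) :
    ∑ i, ((v i).val : ℝ) * (if j ≤ i then 1 else 0) = #{i | v i ≠ 0 ∧ j ≤ i} := by
  rw [sum_val_mul_eq_sum_filter_ne_zero, sum_boole, filter_filter]

theorem monotone_ite_le_one_zero {ι : Type*} [Preorder ι] [DecidableLE ι] (j : ι) :
    Monotone fun i : ι => if j ≤ i then (1 : ℝ) else 0 := by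
  intro a b hab
  dsimp only
  split_ifs with ha hb <;> first | exact absurd (ha.trans hab) hb | norm_num

/-- If `e` does not precede `e'`, then some non-decreasing nonnegative
(indeed 0/1-valued) reliability vector makes `Γ(e) > Γ(e')`. -/
theorem not_prec_exists_soft_weight_gt (N : ℕ) (e e' : Fin N → ZMod 2)
    (h : ¬ Prec e e') :
    ∃ r : Fin N → ℝ, Monotone r ∧ (∀ i, 0 ≤ r i) ∧ (∀ i, r i = 0 ∨ r i = 1) ∧
      ∑ i : Fin N, ((e' i).val : ℝ) * r i < ∑ i : Fin N, ((e i).val : ℝ) * r i := by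
  obtain ⟨j, hj⟩ : ∃ j, #{i | e' i ≠ 0 ∧ j ≤ i} < #{i | e i ≠ 0 ∧ j ≤ i} := by
    by_contra! hcount
    exact h (prec_of_card_suffix_le hcount)
  refine ⟨fun i => if j ≤ i then 1 else 0, monotone_ite_le_one_zero j, fun i => ?_,
    fun i => ?_, ?_⟩
  · dsimp only; split_ifs <;> norm_num
  · dsimp only; split_ifs <;> simp
  · rw [sum_val_mul_ite_le_eq_card, sum_val_mul_ite_le_eq_card]
    exact_mod_cast hj
end
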